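/- arXiv:1708.04440 — 5 statements merged into one kernel-verified Lean document; each statement's English description precedes it below -/
import Mathlib

section
/- Let n ≥ 1 and δ ≥ 1 be integers, let α < γ be real numbers, and let b_0,…,b_n : ℝ → ℝ be smooth functions satisfying: (i) the left-endpoint Hermite conditions at α: b_0(α) = 1, and for each 1 ≤ i ≤ n, b_i^{(j)}(α) = 0 for 0 ≤ j ≤ i−1 and b_i^{(i)}(α) > 0; (ii) the right-endpoint Hermite conditions at γ: b_n(γ) = 1, for each 0 ≤ i ≤ n−1, b_i^{(j)}(γ) = 0 for 0 ≤ j ≤ n−1−i, and b_{n−i}^{(i)}(γ) ≠ 0 for 1 ≤ i ≤ n. Let c : ℝ → ℝ^δ be smooth and let λ_0,…,λ_n ∈ ℝ^δ satisfy Σ_{i=0}^{n} λ_i · b_i(u) = c(u) for all u ∈ ℝ. Then: λ_0 = c(α); λ_n = c(γ); for every i = 1,…,⌊(n−1)/2⌋, λ_i = (1/b_i^{(i)}(α)) · ( c^{(i)}(α) − Σ_{j=0}^{i−1} λ_j · b_j^{(i)}(α) ); and for every i = 1,…,⌊n/2⌋, λ_{n−i} = (1/b_{n−i}^{(i)}(γ))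 · ( c^{(i)}(γ) − Σ_{j=0}^{i−1} λ_{n−j} · b_{n−j}^{(i)}(γ) ). -/
lemma iteratedDeriv_smul_const_aux {δ : ℕ} {k : ℕ} {f : ℝ → ℝ} (hf : ContDiff ℝ (⊤ : ℕ∞) f)
    (v : Fin δ → ℝ) (x : ℝ) :
    iteratedDeriv k (fun u => f u • v) x = iteratedDeriv k f x • v := by
  set g : ℝ →L[ℝ] (Fin δ → ℝ) := (ContinuousLinearMap.id ℝ ℝ).smulRight v with hg
  have hcomp : (fun u => f u • v) = g ∘ f := by
    funext u; simp [hg]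
  rw [hcomp, iteratedDeriv_eq_iteratedFDeriv,
    g.iteratedFDeriv_comp_left hf.contDiffAt (by exact_mod_cast le_top), iteratedDeriv_eq_iteratedFDeriv]
  simp [hg]

/-- General B-algorithm, left-arc half. -/
theorem stmt_2 (n δ : ℕ) (hn : 1 ≤ n) (hδ : 1 ≤ δ) (α γ : ℝ) (hαγ : α < γ)
    (b : ℕ → ℝ → ℝ) (hb : ∀ i ≤ n, ContDiff ℝ (⊤ : ℕ∞) (b i))
    (hα0 : b 0 α = 1)
    (hαzero : ∀ i, 1 ≤ i → i ≤ n → ∀ j < i, iteratedDeriv j (b i) α = 0)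
    (hαpos : ∀ i, 1 ≤ i → i ≤ n → 0 < iteratedDeriv i (b i) α)
    (hγ1 : b n γ = 1)
    (hγzero : ∀ i < n, ∀ j < n - i, iteratedDeriv j (b i) γ = 0)
    (hγne : ∀ i, 1 ≤ i → i ≤ n → iteratedDeriv i (b (n - i)) γ ≠ 0)
    (c : ℝ → Fin δ → ℝ) (hc : ContDiff ℝ (⊤ : ℕ∞) c)
    (lam : ℕ → Fin δ → ℝ)
    (hrep : ∀ u : ℝ, ∑ i ∈ Finset.range (n + 1), b i u • lam i = c u) :
    lam 0 = c α ∧ lam n = c γ ∧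
      (∀ i, 1 ≤ i → i ≤ (n - 1) / 2 →
        lam i = (iteratedDeriv i (b i) α)⁻¹ •
          (iteratedDeriv i c α - ∑ j ∈ Finset.range i, iteratedDeriv i (b j) α • lam j)) ∧
      (∀ i, 1 ≤ i → i ≤ n / 2 →
        lam (n - i) = (iteratedDeriv i (b (n - i)) γ)⁻¹ •
          (iteratedDeriv i c γ -
            ∑ j ∈ Finset.range i, iteratedDeriv i (b (n - j)) γ • lam (n - j))) := by
  -- iterated derivatives of the representation
  have hsum : ∀ (k : ℕ) (x : ℝ),
      iteratedDeriv k c x = ∑ i ∈ Finset.range (n + 1), iteratedDeriv k (b i) x • lam i := by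
    intro k x
    have hce : c = fun u => ∑ i ∈ Finset.range (n + 1), b i u • lam i :=
      funext fun u => (hrep u).symm
    have hmem : ∀ i ∈ Finset.range (n + 1), ContDiff ℝ (k : ℕ∞) (fun u => b i u • lam i) := by
      intro i hi
      exact (((hb i (Nat.lt_succ_iff.mp (Finset.mem_range.mp hi))).smul
        contDiff_const)).of_le (by exact_mod_cast le_top)
    calc iteratedDeriv k c x
        = iteratedFDeriv ℝ k (∑ i ∈ Finset.range (n + 1), (fun u => b i u • lam i) ·) x
            (fun _ => 1) := by
          rw [hce, iteratedDeriv_eq_iteratedFDeriv]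
      _ = ∑ i ∈ Finset.range (n + 1),
            iteratedFDeriv ℝ k (fun u => b i u • lam i) x (fun _ => 1) := by
          rw [iteratedFDeriv_sum hmem]
          simp
      _ = ∑ i ∈ Finset.range (n + 1), iteratedDeriv k (b i) x • lam i := by
          refine Finset.sum_congr rfl fun i hi => ?_
          rw [← iteratedDeriv_eq_iteratedFDeriv,
            iteratedDeriv_smul_const_aux (hb i (Nat.lt_succ_iff.mp (Finset.mem_range.mp hi)))]
  -- lam 0 = c α
  have h0 : lam 0 = c α := by
    rw [← hrep α, Finset.sum_eq_single 0]
    · rw [hα0, one_smul]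
    · intro i hi hi0
      have h1i : 1 ≤ i := Nat.one_le_iff_ne_zero.mpr hi0
      have := hαzero i h1i (Nat.lt_succ_iff.mp (Finset.mem_range.mp hi)) 0 h1i
      rw [iteratedDeriv_zero] at this
      rw [this, zero_smul]
    · simp
  -- lam n = c γ
  have hnγ : lam n = c γ := by
    rw [← hrep γ, Finset.sum_eq_single n]
    · rw [hγ1, one_smul]
    · intro i hi hin
      have hilt : i < n := lt_of_le_of_ne (Nat.lt_succ_iff.mp (Finset.mem_range.mp hi)) hin
      have := hγzero i hilt 0 (Nat.sub_pos_of_lt hilt)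
      rw [iteratedDeriv_zero] at this
      rw [this, zero_smul]
    · simp
  refine ⟨h0, hnγ, ?_, ?_⟩
  · -- left recursion
    intro i h1i hile
    have hin : i ≤ n := le_trans (le_trans hile (Nat.div_le_self _ _)) (Nat.sub_le n 1)
    have hkey : iteratedDeriv i c α =
        (∑ j ∈ Finset.range i, iteratedDeriv i (b j) α • lam j) +
          iteratedDeriv i (b i) α • lam i := by
      rw [hsum i α, ← Finset.sum_range_succ]
      refine (Finset.sum_subset (Finset.range_subset_range.mpr (Nat.succ_le_succ hin))
        fun j hj hj' => ?_).symm
      have hji : i < j := by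
        simp only [Finset.mem_range, not_lt] at hj'
        exact hj'
      have h1j : 1 ≤ j := le_trans h1i hji.le
      rw [hαzero j h1j (Nat.lt_succ_iff.mp (Finset.mem_range.mp hj)) i hji, zero_smul]
    have hD : iteratedDeriv i (b i) α ≠ 0 := (hαpos i h1i hin).ne'
    rw [hkey, add_sub_cancel_left, smul_smul, inv_mul_cancel₀ hD, one_smul]
  · -- right recursion
    intro i h1i hile
    have hin : i ≤ n := le_trans hile (Nat.div_le_self _ _)
    have hkey : iteratedDeriv i c γ =
        (∑ j ∈ Finset.range i, iteratedDeriv i (b (n - j)) γ • lam (n - j)) +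
          iteratedDeriv i (b (n - i)) γ • lam (n - i) := by
      rw [hsum i γ]
      have hrefl : ∑ k ∈ Finset.range (n + 1), iteratedDeriv i (b k) γ • lam k =
          ∑ j ∈ Finset.range (n + 1), iteratedDeriv i (b (n - j)) γ • lam (n - j) := by
        rw [← Finset.sum_range_reflect (fun k => iteratedDeriv i (b k) γ • lam k) (n + 1)]
        refine Finset.sum_congr rfl fun j hj => ?_
        congr 2 <;> omega
      rw [hrefl, ← Finset.sum_range_succ]
      refine (Finset.sum_subset (Finset.range_subset_range.mpr (Nat.succ_le_succ hin))
        fun j hj hj' => ?_).symm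
      have hij : i < j := by
        simp only [Finset.mem_range, not_lt] at hj'
        exact hj'
      have hjn : j ≤ n := Nat.lt_succ_iff.mp (Finset.mem_range.mp hj)
      have hz : iteratedDeriv i (b (n - j)) γ = 0 := by
        refine hγzero (n - j) (by omega) i (by omega)
      rw [hz, zero_smul]
    have hD : iteratedDeriv i (b (n - i)) γ ≠ 0 := hγne i h1i hin
    rw [hkey, add_sub_cancel_left, smul_smul, inv_mul_cancel₀ hD, one_smul]
end

section
/- Let n ≥ 1 and δ ≥ 1 be integers, let γ < β be real numbers, and let b_0,…,b_n : ℝ → ℝ be smooth functions satisfying: (i) the left-endpoint Hermite conditions at γ: b_0(γ) = 1, and for each 1 ≤ i ≤ n, b_i^{(j)}(γ) = 0 for 0 ≤ j ≤ i−1 and b_i^{(i)}(γ) > 0; (ii) the right-endpoint Hermite conditions at β: b_n(β) = 1, for each 0 ≤ i ≤ n−1, b_i^{(j)}(β) = 0 for 0 ≤ j ≤ n−1−i, and b_{n−i}^{(i)}(β) ≠ 0 for 1 ≤ i ≤ n. Let c : ℝ → ℝ^δ be smooth and let ϱ_0,…,ϱ_n ∈ ℝ^δ satisfy Σ_{i=0}^{n}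 ϱ_i · b_i(u) = c(u) for all u ∈ ℝ. Then: ϱ_0 = c(γ); ϱ_n = c(β); for every i = 1,…,⌊n/2⌋, ϱ_i = (1/b_i^{(i)}(γ)) · ( c^{(i)}(γ) − Σ_{j=0}^{i−1} ϱ_j · b_j^{(i)}(γ) ); and for every i = 1,…,⌊(n−1)/2⌋, ϱ_{n−i} = (1/b_{n−i}^{(i)}(β)) · ( c^{(i)}(β) − Σ_{j=0}^{i−1} ϱ_{n−j} · b_{n−j}^{(i)}(β) ). -/
lemma stmt_3_key (n : ℕ) (δ : ℕ) (b : ℕ → ℝ → ℝ) (hb : ∀ i ≤ n, ContDiff ℝ (⊤ : ℕ∞) (b i))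
    (ϱ : ℕ → Fin δ → ℝ) (k : ℕ) :
    iteratedDeriv k (fun u => ∑ i ∈ Finset.range (n + 1), b i u • ϱ i)
      = fun u => ∑ i ∈ Finset.range (n + 1), iteratedDeriv k (b i) u • ϱ i := by
  induction k with
  | zero => simp
  | succ k ih =>
    funext u
    rw [iteratedDeriv_succ, ih]
    simp only [iteratedDeriv_succ]
    have hdiff : ∀ i ∈ Finset.range (n + 1),
        DifferentiableAt ℝ (fun u => iteratedDeriv k (b i) u • ϱ i) u := by
      intro i hi
      exact ((hb i (Nat.lt_succ_iff.mp (Finset.mem_range.mp hi))).differentiable_iteratedDeriv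
        k (by exact_mod_cast lt_top_iff_ne_top.mpr (by simp))).differentiableAt.smul_const _
    rw [deriv_fun_sum hdiff]
    refine Finset.sum_congr rfl fun i hi => ?_
    rw [deriv_smul_const (((hb i (Nat.lt_succ_iff.mp
      (Finset.mem_range.mp hi))).differentiable_iteratedDeriv
        k (by exact_mod_cast lt_top_iff_ne_top.mpr (by simp))).differentiableAt)]

/-- General B-algorithm, right-arc half. -/
theorem stmt_3 (n δ : ℕ) (hn : 1 ≤ n) (hδ : 1 ≤ δ) (γ β : ℝ) (hγβ : γ < β)
    (b : ℕ → ℝ → ℝ) (hb : ∀ i ≤ n, ContDiff ℝ (⊤ : ℕ∞) (b i))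
    (hγ0 : b 0 γ = 1)
    (hγzero : ∀ i, 1 ≤ i → i ≤ n → ∀ j < i, iteratedDeriv j (b i) γ = 0)
    (hγpos : ∀ i, 1 ≤ i → i ≤ n → 0 < iteratedDeriv i (b i) γ)
    (hβ1 : b n β = 1)
    (hβzero : ∀ i < n, ∀ j < n - i, iteratedDeriv j (b i) β = 0)
    (hβne : ∀ i, 1 ≤ i → i ≤ n → iteratedDeriv i (b (n - i)) β ≠ 0)
    (c : ℝ → Fin δ → ℝ) (hc : ContDiff ℝ (⊤ : ℕ∞) c)
    (ϱ : ℕ → Fin δ → ℝ)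
    (hrep : ∀ u : ℝ, ∑ i ∈ Finset.range (n + 1), b i u • ϱ i = c u) :
    ϱ 0 = c γ ∧ ϱ n = c β ∧
      (∀ i, 1 ≤ i → i ≤ n / 2 →
        ϱ i = (iteratedDeriv i (b i) γ)⁻¹ •
          (iteratedDeriv i c γ - ∑ j ∈ Finset.range i, iteratedDeriv i (b j) γ • ϱ j)) ∧
      (∀ i, 1 ≤ i → i ≤ (n - 1) / 2 →
        ϱ (n - i) = (iteratedDeriv i (b (n - i)) β)⁻¹ •
          (iteratedDeriv i c β -
            ∑ j ∈ Finset.range i, iteratedDeriv i (b (n - j)) β • ϱ (n - j))) := by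
  have hceq : c = fun u => ∑ i ∈ Finset.range (n + 1), b i u • ϱ i :=
    (funext hrep).symm
  have L : ∀ k u, iteratedDeriv k c u
      = ∑ i ∈ Finset.range (n + 1), iteratedDeriv k (b i) u • ϱ i := by
    intro k u
    rw [hceq, stmt_3_key n δ b hb ϱ k]
  refine ⟨?_, ?_, ?_, ?_⟩
  · -- ϱ 0 = c γ
    rw [← hrep γ]
    rw [Finset.sum_eq_single_of_mem 0 (by simp)]
    · rw [hγ0, one_smul]
    · intro j hj hj0
      have hj1 : 1 ≤ j := Nat.one_le_iff_ne_zero.mpr hj0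
      have hjn : j ≤ n := Nat.lt_succ_iff.mp (Finset.mem_range.mp hj)
      have := hγzero j hj1 hjn 0 hj1
      rw [iteratedDeriv_zero] at this
      rw [this, zero_smul]
  · -- ϱ n = c β
    rw [← hrep β]
    rw [Finset.sum_eq_single_of_mem n (by simp)]
    · rw [hβ1, one_smul]
    · intro j hj hjn
      have hjn' : j < n := lt_of_le_of_ne (Nat.lt_succ_iff.mp (Finset.mem_range.mp hj)) hjn
      have := hβzero j hjn' 0 (Nat.sub_pos_of_lt hjn')
      rw [iteratedDeriv_zero] at this
      rw [this, zero_smul]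
  · -- interior at γ
    intro i hi1 hi2
    have hin : i ≤ n := le_trans hi2 (Nat.div_le_self n 2)
    have hsum : iteratedDeriv i c γ
        = ∑ j ∈ Finset.range (i + 1), iteratedDeriv i (b j) γ • ϱ j := by
      rw [L i γ]
      refine (Finset.sum_subset (Finset.range_subset_range.mpr (by omega)) ?_).symm
      intro j hj hj'
      have hji : i < j := by
        simp only [Finset.mem_range, Nat.lt_succ_iff] at hj hj'; omega
      have hjn : j ≤ n := Nat.lt_succ_iff.mp (Finset.mem_range.mp hj)
      rw [hγzero j (by omega) hjn i hji, zero_smul]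
    rw [Finset.sum_range_succ] at hsum
    rw [hsum, add_sub_cancel_left, inv_smul_smul₀ (ne_of_gt (hγpos i hi1 hin))]
  · -- interior at β
    intro i hi1 hi2
    have hin : i ≤ n := by omega
    have hsum : iteratedDeriv i c β
        = ∑ j ∈ Finset.range (i + 1), iteratedDeriv i (b (n - j)) β • ϱ (n - j) := by
      rw [L i β, ← Finset.sum_range_reflect]
      have : ∀ j ∈ Finset.range (n + 1),
          (fun j => iteratedDeriv i (b j) β • ϱ j) (n + 1 - 1 - j)
            = iteratedDeriv i (b (n - j)) β • ϱ (n - j) := by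
        intro j hj; simp
      rw [Finset.sum_congr rfl this]
      refine (Finset.sum_subset (Finset.range_subset_range.mpr (by omega)) ?_).symm
      intro j hj hj'
      have hji : i < j := by
        simp only [Finset.mem_range, Nat.lt_succ_iff] at hj hj'; omega
      have hjn : j ≤ n := Nat.lt_succ_iff.mp (Finset.mem_range.mp hj)
      have hlt : n - j < n := by omega
      have : i < n - (n - j) := by omega
      rw [hβzero (n - j) hlt i this, zero_smul]
    rw [Finset.sum_range_succ] at hsum
    rw [hsum, add_sub_cancel_left, inv_smul_smul₀ (hβne i hi1 hin)]
end

section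
/- Let n ≥ 1 be an integer, α < β real numbers, and let b_0,…,b_n : ℝ → ℝ be smooth functions satisfying: (i) the left-endpoint Hermite conditions at α: b_0(α) = 1, and for each 1 ≤ i ≤ n, b_i^{(j)}(α) = 0 for 0 ≤ j ≤ i−1 and b_i^{(i)}(α) > 0; (ii) the right-endpoint Hermite conditions at β: b_n(β) = 1, for each 0 ≤ i ≤ n−1, b_i^{(j)}(β) = 0 for 0 ≤ j ≤ n−1−i, and b_{n−j}^{(j)}(β) ≠ 0 for 1 ≤ j ≤ n. Let φ_1,…,φ_n : ℝ → ℝ be smooth functions and t_{i,k} (1 ≤ i ≤ n, 0 ≤ k ≤ n) real numbers such that φ_i(u) = Σ_{k=0}^{n} t_{i,k} b_k(u) for all u ∈ ℝ. Then for every 1 ≤ i ≤ n: t_{i,0} = φ_i(α), t_{i,n} = φ_i(β); for every 1 ≤ j ≤ ⌊n/2⌋, t_{i,j} = (1/b_j^{(j)}(α)) · ( φ_i^{(j)}(α) − Σ_{k=0}^{j−1} t_{i,k} b_k^{(j)}(α) ); and for every 1 ≤ j ≤ ⌊(n−1)/2⌋, t_{i,n−j} = (1/b_{n−j}^{(j)}(β))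 · ( φ_i^{(j)}(β) − Σ_{k=0}^{j−1} t_{i,n−k} b_{n−k}^{(j)}(β) ). -/
private lemma itd_add (j : ℕ) (x : ℝ) (f g : ℝ → ℝ)
    (hf : ContDiff ℝ (⊤ : ℕ∞) f) (hg : ContDiff ℝ (⊤ : ℕ∞) g) :
    iteratedDeriv j (fun y => f y + g y) x = iteratedDeriv j f x + iteratedDeriv j g x := by
  simp only [← iteratedDerivWithin_univ]
  exact iteratedDerivWithin_add (Set.mem_univ x) uniqueDiffOn_univ
    (hf.of_le (by exact_mod_cast le_top)).contDiffWithinAt (hg.of_le (by exact_mod_cast le_top)).contDiffWithinAt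

private lemma itd_const_mul (j : ℕ) (x : ℝ) (c : ℝ) (f : ℝ → ℝ) (hf : ContDiff ℝ (⊤ : ℕ∞) f) :
    iteratedDeriv j (fun y => c * f y) x = c * iteratedDeriv j f x := by
  simp only [← iteratedDerivWithin_univ]
  exact iteratedDerivWithin_const_mul (Set.mem_univ x) uniqueDiffOn_univ c
    (hf.of_le (by exact_mod_cast le_top)).contDiffWithinAt

private lemma itd_zero (j : ℕ) (x : ℝ) :
    iteratedDeriv j (fun _ : ℝ => (0 : ℝ)) x = 0 := by
  have : (deriv^[j] (fun _ : ℝ => (0 : ℝ))) = (fun _ : ℝ => (0 : ℝ)) :=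
    Function.iterate_fixed (by ext y; simp) j
  rw [iteratedDeriv_eq_iterate, this]

private lemma itd_sum (u : Finset ℕ) (c : ℕ → ℝ) (g : ℕ → ℝ → ℝ)
    (hg : ∀ k ∈ u, ContDiff ℝ (⊤ : ℕ∞) (g k)) (j : ℕ) (x : ℝ) :
    iteratedDeriv j (fun y => ∑ k ∈ u, c k * g k y) x
      = ∑ k ∈ u, c k * iteratedDeriv j (g k) x := by
  classical
  induction u using Finset.induction with
  | empty => simpa using itd_zero j x
  | @insert a s ha ih =>
      have hsum : ContDiff ℝ (⊤ : ℕ∞) (fun y => ∑ k ∈ s, c k * g k y) := by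
        apply ContDiff.sum
        intro k hk
        exact (hg k (Finset.mem_insert_of_mem hk)).const_smul (c k)
      have hga := hg a (Finset.mem_insert_self a s)
      simp only [Finset.sum_insert ha]
      rw [itd_add j x (fun y => c a * g a y) _ (contDiff_const.mul hga) hsum,
        itd_const_mul j x (c a) _ hga,
        ih (fun k hk => hg k (Finset.mem_insert_of_mem hk))]

/-- recursive formulas (46)-(47) of the efficient general basis transformation. -/
theorem stmt_6 (n : ℕ) (hn : 1 ≤ n) (α β : ℝ) (hαβ : α < β)
    (b : ℕ → ℝ → ℝ) (hbs : ∀ i ≤ n, ContDiff ℝ (⊤ : ℕ∞) (b i))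
    (hα0 : b 0 α = 1)
    (hαzero : ∀ i, 1 ≤ i → i ≤ n → ∀ j < i, iteratedDeriv j (b i) α = 0)
    (hαpos : ∀ i, 1 ≤ i → i ≤ n → 0 < iteratedDeriv i (b i) α)
    (hβ1 : b n β = 1)
    (hβzero : ∀ i < n, ∀ j < n - i, iteratedDeriv j (b i) β = 0)
    (hβne : ∀ j, 1 ≤ j → j ≤ n → iteratedDeriv j (b (n - j)) β ≠ 0)
    (φ : ℕ → ℝ → ℝ) (hφs : ∀ i, 1 ≤ i → i ≤ n → ContDiff ℝ (⊤ : ℕ∞) (φ i))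
    (t : ℕ → ℕ → ℝ)
    (hrep : ∀ i, 1 ≤ i → i ≤ n → ∀ u : ℝ,
      φ i u = ∑ k ∈ Finset.range (n + 1), t i k * b k u) :
    ∀ i, 1 ≤ i → i ≤ n →
      t i 0 = φ i α ∧ t i n = φ i β ∧
        (∀ j, 1 ≤ j → j ≤ n / 2 →
          t i j = (iteratedDeriv j (b j) α)⁻¹ *
            (iteratedDeriv j (φ i) α -
              ∑ k ∈ Finset.range j, t i k * iteratedDeriv j (b k) α)) ∧
        (∀ j, 1 ≤ j → j ≤ (n - 1) / 2 →
          t i (n - j) = (iteratedDeriv j (b (n - j)) β)⁻¹ *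
            (iteratedDeriv j (φ i) β -
              ∑ k ∈ Finset.range j, t i (n - k) * iteratedDeriv j (b (n - k)) β)) := by
  intro i hi1 hin
  have hφrep : φ i = fun u => ∑ k ∈ Finset.range (n + 1), t i k * b k u :=
    funext (hrep i hi1 hin)
  have hED : ∀ (j : ℕ) (x : ℝ), iteratedDeriv j (φ i) x
      = ∑ k ∈ Finset.range (n + 1), t i k * iteratedDeriv j (b k) x := by
    intro j x
    rw [hφrep]
    exact itd_sum _ _ _ (fun k hk => hbs k (by
      simp only [Finset.mem_range] at hk; omega)) j x
  -- left endpoint evaluation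
  have hA : ∀ j ≤ n, iteratedDeriv j (φ i) α
      = (∑ k ∈ Finset.range j, t i k * iteratedDeriv j (b k) α)
        + t i j * iteratedDeriv j (b j) α := by
    intro j hj
    rw [hED, ← Finset.sum_range_succ]
    refine (Finset.sum_subset (Finset.range_subset_range.mpr (by omega)) ?_).symm
    intro k hk hk'
    simp only [Finset.mem_range] at hk hk'
    rw [hαzero k (by omega) (by omega) j (by omega), mul_zero]
  -- right endpoint evaluation
  have hB : ∀ j ≤ n, iteratedDeriv j (φ i) β
      = (∑ m ∈ Finset.range j, t i (n - m) * iteratedDeriv j (b (n - m)) β)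
        + t i (n - j) * iteratedDeriv j (b (n - j)) β := by
    intro j hj
    rw [hED, ← Finset.sum_range_succ]
    have h1 : ∑ k ∈ Finset.range (n + 1), t i k * iteratedDeriv j (b k) β
        = ∑ k ∈ Finset.Icc (n - j) n, t i k * iteratedDeriv j (b k) β := by
      refine (Finset.sum_subset ?_ ?_).symm
      · intro k hk
        simp only [Finset.mem_Icc] at hk
        simp only [Finset.mem_range]; omega
      · intro k hk hk'
        simp only [Finset.mem_range] at hk
        simp only [Finset.mem_Icc] at hk'
        rw [hβzero k (by omega) j (by omega), mul_zero]
    rw [h1]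
    refine (Finset.sum_nbij' (fun m => n - m) (fun k => n - k) ?_ ?_ ?_ ?_ ?_).symm
    · intro m hm; simp only [Finset.mem_range] at hm; simp only [Finset.mem_Icc]; omega
    · intro k hk; simp only [Finset.mem_Icc] at hk; simp only [Finset.mem_range]; omega
    · intro m hm; simp only [Finset.mem_range] at hm; show n - (n - m) = m; omega
    · intro k hk; simp only [Finset.mem_Icc] at hk; show n - (n - k) = k; omega
    · intro m hm; rfl
  refine ⟨?_, ?_, ?_, ?_⟩
  · have h := hA 0 (by omega)
    simp only [iteratedDeriv_zero, Finset.range_zero, Finset.sum_empty, zero_add, hα0,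
      mul_one] at h
    exact h.symm
  · have h := hB 0 (by omega)
    simp only [iteratedDeriv_zero, Finset.range_zero, Finset.sum_empty, zero_add,
      Nat.sub_zero, hβ1, mul_one] at h
    exact h.symm
  · intro j hj1 hj2
    have hne : iteratedDeriv j (b j) α ≠ 0 := (hαpos j hj1 (by omega)).ne'
    rw [hA j (by omega), add_sub_cancel_left, mul_comm (t i j), inv_mul_cancel_left₀ hne]
  · intro j hj1 hj2
    have hne : iteratedDeriv j (b (n - j)) β ≠ 0 := hβne j hj1 (by omega)
    rw [hB j (by omega), add_sub_cancel_left, mul_comm (t i (n - j)),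
      inv_mul_cancel_left₀ hne]
end

section
/- Define κ_pol : ℕ → ℝ by κ_pol(0) = κ_pol(1) = 0, κ_pol(n) = n·⌊n/2⌋·(⌊n/2⌋ + 5) for even n ≥ 2, and κ_pol(n) = n·(⌊n/2⌋² + 4·⌊n/2⌋ − 2) for odd n ≥ 3; and define κ_LU(n,δ) = (2/3)(n+1)³ − (1/2)(n+1)² − (1/6)(n+1) + (2(n+1)² − (n+1))·δ. Then for every integer n ≥ 0 and every integer δ ≥ 1 one has κ_pol(n) < κ_LU(n,δ). -/
/-- The flop count of the efficient general basis transformation, as a real number. -/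
noncomputable def kpolR (n : ℕ) : ℝ :=
  if n ≤ 1 then 0
  else if n % 2 = 0 then (n : ℝ) * ((n / 2 : ℕ) : ℝ) * (((n / 2 : ℕ) : ℝ) + 5)
  else (n : ℝ) * (((n / 2 : ℕ) : ℝ) ^ 2 + 4 * ((n / 2 : ℕ) : ℝ) - 2)

/-- The total flop count of a `δ`-dimensional interpolation or least squares
approximation method based on LU decomposition. -/
noncomputable def kLU (n δ : ℕ) : ℝ :=
  (2 / 3 : ℝ) * ((n : ℝ) + 1) ^ 3 - (1 / 2 : ℝ) * ((n : ℝ) + 1) ^ 2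
    - (1 / 6 : ℝ) * ((n : ℝ) + 1) + (2 * ((n : ℝ) + 1) ^ 2 - ((n : ℝ) + 1)) * (δ : ℝ)

/-!
Both parities of `κ_pol` are dominated by the even formula `n m (m + 5)` with `m = ⌊n/2⌋ ≤ n/2`,
hence by `n³/4 + 5n²/2`, while `κ_LU` is increasing in `δ` and already at `δ = 1` has leading
term `2n³/3`; comparing the two cubics coefficientwise finishes the proof.
-/

theorem kpolR_le_even_formula (n : ℕ) :
    kpolR n ≤ (n : ℝ) * ((n / 2 : ℕ) : ℝ) * (((n / 2 : ℕ) : ℝ) + 5) := by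
  have hn : (0 : ℝ) ≤ n := n.cast_nonneg
  have hm : (0 : ℝ) ≤ ((n / 2 : ℕ) : ℝ) := Nat.cast_nonneg _
  unfold kpolR
  split_ifs
  · positivity
  · exact le_rfl
  · nlinarith

theorem kpolR_le_cubic (n : ℕ) : kpolR n ≤ (n : ℝ) ^ 3 / 4 + 5 * (n : ℝ) ^ 2 / 2 := by
  have hn : (0 : ℝ) ≤ n := n.cast_nonneg
  have hm : (0 : ℝ) ≤ ((n / 2 : ℕ) : ℝ) := Nat.cast_nonneg _
  have hmn : ((n / 2 : ℕ) : ℝ) ≤ (n : ℝ) / 2 := by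
    simpa using (Nat.cast_div_le (m := n) (n := 2) (α := ℝ))
  calc kpolR n ≤ (n : ℝ) * ((n / 2 : ℕ) : ℝ) * (((n / 2 : ℕ) : ℝ) + 5) :=
        kpolR_le_even_formula n
    _ ≤ (n : ℝ) * ((n : ℝ) / 2) * ((n : ℝ) / 2 + 5) := by gcongr
    _ = (n : ℝ) ^ 3 / 4 + 5 * (n : ℝ) ^ 2 / 2 := by ring

theorem kLU_one_gt_cubic (n : ℕ) : (n : ℝ) ^ 3 / 4 + 5 * (n : ℝ) ^ 2 / 2 < kLU n 1 := by
  have hn : (0 : ℝ) ≤ n := n.cast_nonneg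
  unfold kLU
  push_cast
  nlinarith [pow_nonneg hn 3]

theorem kLU_mono_right (n : ℕ) : Monotone (kLU n) := by
  intro δ δ' h
  have hcoef : (0 : ℝ) ≤ 2 * ((n : ℝ) + 1) ^ 2 - ((n : ℝ) + 1) := by
    nlinarith [(n.cast_nonneg : (0 : ℝ) ≤ n)]
  unfold kLU
  gcongr

/-- `κ_pol(n) < κ_LU(n,δ)` for all `n ≥ 0` and `δ ≥ 1`. -/
theorem stmt_9 : ∀ (n δ : ℕ), 1 ≤ δ → kpolR n < kLU n δ := by
  intro n δ hδ
  calc kpolR n ≤ (n : ℝ) ^ 3 / 4 + 5 * (n : ℝ) ^ 2 / 2 := kpolR_le_cubic n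
    _ < kLU n 1 := kLU_one_gt_cubic n
    _ ≤ kLU n δ := kLU_mono_right n hδ
end

section
/- Let n ≥ 1 and δ ≥ 1 be integers, α < β real numbers. Let b_0,…,b_n : ℝ → ℝ and B_0,…,B_{n+1} : ℝ → ℝ be differentiable functions satisfying: (i) partition of unity: Σ_{i=0}^{n} b_i(u) = 1 and Σ_{i=0}^{n+1} B_i(u) = 1 for all u ∈ ℝ; (ii) endpoint interpolation at α: b_0(α) = 1, b_i(α) = 0 for 1 ≤ i ≤ n, B_0(α) = 1, B_i(α) = 0 for 1 ≤ i ≤ n+1; (iii) first-derivative Hermite conditions at α: b_i'(α) = 0 for 2 ≤ i ≤ n, B_i'(α) = 0 for 2 ≤ i ≤ n+1, and B_1'(α) ≠ 0. If p_0,…,p_n ∈ ℝ^δ and q_0,…,q_{n+1} ∈ ℝ^δ satisfy Σ_{i=0}^{n} p_i · b_i(u) = Σ_{i=0}^{n+1} q_i · B_i(u) for all u ∈ ℝ, then q_1 = (1 − b_1'(α)/B_1'(α)) · p_0 + (b_1'(α)/B_1'(α)) · p_1. -/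
/-!
At `α` the Hermite conditions make both B-curves start at `p 0 = q 0`, and, because the
derivatives of a partition of unity sum to zero, their velocities there are
`b₁'(α) (p 1 - p 0)` and `B₁'(α) (q 1 - q 0)`. Equating the velocities gives `q 1`.
-/

open Finset

section

variable {E : Type*} [NormedAddCommGroup E] [NormedSpace ℝ E] {b : ℕ → ℝ → ℝ} {m : ℕ} {α : ℝ}

theorem sum_deriv_eq_zero_of_sum_eq_one (hb : ∀ i < m, DifferentiableAt ℝ (b i) α)
    (hsum : ∀ u, ∑ i ∈ range m, b i u = 1) :
    ∑ i ∈ range m, deriv (b i) α = 0 := by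
  have h : HasDerivAt (fun u => ∑ i ∈ range m, b i u) (∑ i ∈ range m, deriv (b i) α) α :=
    HasDerivAt.fun_sum fun i hi => (hb i (mem_range.1 hi)).hasDerivAt
  rw [funext hsum] at h
  exact h.unique (hasDerivAt_const α 1)

theorem sum_smul_eq_of_eq_single (p : ℕ → E) (hm : 0 < m) (h0 : b 0 α = 1)
    (hb : ∀ i, 1 ≤ i → i < m → b i α = 0) :
    ∑ i ∈ range m, b i α • p i = p 0 := by
  rw [sum_eq_single_of_mem 0 (mem_range.2 hm), h0, one_smul]
  intro i hi hi0
  rw [hb i (Nat.one_le_iff_ne_zero.2 hi0) (mem_range.1 hi), zero_smul]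

theorem hasDerivAt_sum_smul_of_sum_eq_one (p : ℕ → E)
    (hb : ∀ i < m, DifferentiableAt ℝ (b i) α) (hsum : ∀ u, ∑ i ∈ range m, b i u = 1) :
    HasDerivAt (fun u => ∑ i ∈ range m, b i u • p i)
      (∑ i ∈ range m, deriv (b i) α • (p i - p 0)) α := by
  have h : HasDerivAt (fun u => ∑ i ∈ range m, b i u • p i)
      (∑ i ∈ range m, deriv (b i) α • p i) α :=
    HasDerivAt.fun_sum fun i hi => (hb i (mem_range.1 hi)).hasDerivAt.smul_const (p i)
  simpa only [smul_sub, sum_sub_distrib, ← sum_smul, sum_deriv_eq_zero_of_sum_eq_one hb hsum,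
    zero_smul, sub_zero] using h

theorem hasDerivAt_sum_smul_of_deriv_eq_zero (p : ℕ → E) (hm : 1 < m)
    (hb : ∀ i < m, DifferentiableAt ℝ (b i) α) (hsum : ∀ u, ∑ i ∈ range m, b i u = 1)
    (hb' : ∀ i, 2 ≤ i → i < m → deriv (b i) α = 0) :
    HasDerivAt (fun u => ∑ i ∈ range m, b i u • p i) (deriv (b 1) α • (p 1 - p 0)) α := by
  convert hasDerivAt_sum_smul_of_sum_eq_one p hb hsum using 1
  rw [sum_eq_single_of_mem 1 (mem_range.2 hm)]
  intro i hi hi1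
  rcases Nat.lt_or_ge i 2 with hi2 | hi2
  · obtain rfl : i = 0 := by omega
    rw [sub_self, smul_zero]
  · rw [hb' i hi2 (mem_range.1 hi), zero_smul]

end

theorem stmt_16_general (n δ : ℕ) (hn : 1 ≤ n) (α : ℝ)
    (b B : ℕ → ℝ → ℝ)
    (hbd : ∀ i ≤ n, Differentiable ℝ (b i))
    (hBd : ∀ i ≤ n + 1, Differentiable ℝ (B i))
    (hbpart : ∀ u : ℝ, ∑ i ∈ Finset.range (n + 1), b i u = 1)
    (hBpart : ∀ u : ℝ, ∑ i ∈ Finset.range (n + 2), B i u = 1)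
    (hbα : b 0 α = 1) (hbα0 : ∀ i, 1 ≤ i → i ≤ n → b i α = 0)
    (hBα : B 0 α = 1) (hBα0 : ∀ i, 1 ≤ i → i ≤ n + 1 → B i α = 0)
    (hb' : ∀ i, 2 ≤ i → i ≤ n → deriv (b i) α = 0)
    (hB' : ∀ i, 2 ≤ i → i ≤ n + 1 → deriv (B i) α = 0)
    (hB1 : deriv (B 1) α ≠ 0)
    (p q : ℕ → Fin δ → ℝ)
    (heq : ∀ u : ℝ,
      ∑ i ∈ Finset.range (n + 1), b i u • p i =
        ∑ i ∈ Finset.range (n + 2), B i u • q i) :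
    q 1 = (1 - deriv (b 1) α / deriv (B 1) α) • p 0 +
      (deriv (b 1) α / deriv (B 1) α) • p 1 := by
  have hq0 : q 0 = p 0 := by
    have h := heq α
    rwa [sum_smul_eq_of_eq_single p (by omega) hbα fun i h1 h2 => hbα0 i h1 (by omega),
      sum_smul_eq_of_eq_single q (by omega) hBα fun i h1 h2 => hBα0 i h1 (by omega),
      eq_comm] at h
  have hp' := hasDerivAt_sum_smul_of_deriv_eq_zero p (by omega)
    (fun i hi => (hbd i (by omega)).differentiableAt) hbpart fun i h2 hi => hb' i h2 (by omega)
  have hq' := hasDerivAt_sum_smul_of_deriv_eq_zero q (by omega)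
    (fun i hi => (hBd i (by omega)).differentiableAt) hBpart fun i h2 hi => hB' i h2 (by omega)
  rw [← funext heq] at hq'
  have hvel : deriv (b 1) α • (p 1 - p 0) = deriv (B 1) α • (q 1 - p 0) := by
    simpa only [hq0] using hp'.unique hq'
  have hq1 : q 1 - p 0 = (deriv (b 1) α / deriv (B 1) α) • (p 1 - p 0) := by
    rw [div_eq_inv_mul, mul_smul, hvel, inv_smul_smul₀ hB1]
  rw [sub_eq_iff_eq_add] at hq1
  rw [hq1]
  module

/-- the `i = 1` instance of formula (24) of the lemma
'General order elevation'. -/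
theorem stmt_16 (n δ : ℕ) (hn : 1 ≤ n) (hδ : 1 ≤ δ) (α β : ℝ) (hαβ : α < β)
    (b B : ℕ → ℝ → ℝ)
    (hbd : ∀ i ≤ n, Differentiable ℝ (b i))
    (hBd : ∀ i ≤ n + 1, Differentiable ℝ (B i))
    (hbpart : ∀ u : ℝ, ∑ i ∈ Finset.range (n + 1), b i u = 1)
    (hBpart : ∀ u : ℝ, ∑ i ∈ Finset.range (n + 2), B i u = 1)
    (hbα : b 0 α = 1) (hbα0 : ∀ i, 1 ≤ i → i ≤ n → b i α = 0)
    (hBα : B 0 α = 1) (hBα0 : ∀ i, 1 ≤ i → i ≤ n + 1 → B i α = 0)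
    (hb' : ∀ i, 2 ≤ i → i ≤ n → deriv (b i) α = 0)
    (hB' : ∀ i, 2 ≤ i → i ≤ n + 1 → deriv (B i) α = 0)
    (hB1 : deriv (B 1) α ≠ 0)
    (p q : ℕ → Fin δ → ℝ)
    (heq : ∀ u : ℝ,
      ∑ i ∈ Finset.range (n + 1), b i u • p i =
        ∑ i ∈ Finset.range (n + 2), B i u • q i) :
    q 1 = (1 - deriv (b 1) α / deriv (B 1) α) • p 0 +
      (deriv (b 1) α / deriv (B 1) α) • p 1 :=
  stmt_16_general n δ hn α b B hbd hBd hbpart hBpart hbα hbα0 hBα hBα0 hb' hB' hB1 p q heq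
end
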